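/- If a rotation r of ℝ³ of order k ≥ 3 about a line L through the origin maps an affine plane H ⊆ ℝ³ to itself, then H is perpendicular to L. -/

import Mathlib

noncomputable section

abbrev E3 : Type := EuclideanSpace ℝ (Fin 3)

/-- Determinant of a linear isometry equivalence of `ℝ³`. -/
def detLIE (g : E3 ≃ₗᵢ[ℝ] E3) : ℝ := LinearMap.det (g.toLinearEquiv : E3 →ₗ[ℝ] E3)

/-!
An isometry maps a line it preserves onto itself by `±1`, so `r²` fixes every `r`-invariant line
pointwise. The direction `D` of `H` is `r`-invariant, hence so is the line `Dᗮ`. If `Dᗮ` were not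
the axis `L`, the orthogonal complement of `L ⊔ Dᗮ` would be a third invariant line; these three
lines span `ℝ³`, so `r² = 1`, contradicting `orderOf r ≥ 3`. Hence `Dᗮ = L`.
-/

open Module Submodule

theorem AffineSubspace.direction_map_eq_of_image_eq {k V : Type*} [Ring k] [AddCommGroup V]
    [Module k V] (f : V →ₗ[k] V) {H : AffineSubspace k V} (h : f '' H = H) :
    H.direction.map f = H.direction := by
  have : H.map f.toAffineMap = H := SetLike.coe_injective (by rw [AffineSubspace.coe_map]; exact h)
  simpa using congrArg AffineSubspace.direction this

theorem LinearIsometryEquiv.apply_apply_eq_of_mem_of_finrank_eq_one {E : Type*}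
    [NormedAddCommGroup E] [NormedSpace ℝ E] (r : E ≃ₗᵢ[ℝ] E) {K : Submodule ℝ E}
    (hK : finrank ℝ K = 1) {x : E} (hx : x ∈ K) (hrx : r x ∈ K) : r (r x) = x := by
  rcases eq_or_ne x 0 with rfl | hx0
  · simp
  obtain ⟨c, hc⟩ := exists_smul_eq_of_finrank_eq_one hK (x := ⟨x, hx⟩) (by simpa using hx0)
    ⟨r x, hrx⟩
  have hc : r x = c • x := by simpa using hc.symm
  have hc1 : |c| = 1 := by
    have := r.norm_map x
    rw [hc, norm_smul, Real.norm_eq_abs] at this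
    exact (mul_eq_right₀ (norm_ne_zero_iff.mpr hx0)).mp this
  have hcc : c * c = 1 := by rw [← abs_mul_abs_self, hc1, one_mul]
  rw [hc, map_smul, hc, smul_smul, hcc, one_smul]

section FinrankThree

variable {E : Type*} [NormedAddCommGroup E] [InnerProductSpace ℝ E] [FiniteDimensional ℝ E]

theorem Submodule.finrank_orthogonal_sup_eq_one {K₁ K₂ : Submodule ℝ E} (hE : finrank ℝ E = 3)
    (h₁ : finrank ℝ K₁ = 1) (h₂ : finrank ℝ K₂ = 1) (hne : K₁ ≠ K₂) :
    finrank ℝ (K₁ ⊔ K₂)ᗮ = 1 := by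
  have hinf : K₁ ⊓ K₂ = ⊥ := ((isAtom_iff_finrank_eq_one.mpr h₁).disjoint_of_ne
    (isAtom_iff_finrank_eq_one.mpr h₂) hne).eq_bot
  have hsup := finrank_sup_add_finrank_inf_eq K₁ K₂
  have hperp := finrank_add_finrank_orthogonal (K₁ ⊔ K₂)
  rw [hinf, finrank_bot] at hsup
  omega

theorem LinearIsometryEquiv.sq_eq_one_of_map_eq_of_finrank_eq_one (hE : finrank ℝ E = 3)
    (r : E ≃ₗᵢ[ℝ] E) {K₁ K₂ : Submodule ℝ E} (h₁ : finrank ℝ K₁ = 1) (h₂ : finrank ℝ K₂ = 1)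
    (hne : K₁ ≠ K₂) (hr₁ : K₁.map (r.toLinearEquiv : E →ₗ[ℝ] E) = K₁)
    (hr₂ : K₂.map (r.toLinearEquiv : E →ₗ[ℝ] E) = K₂) : r ^ 2 = 1 := by
  set M := (K₁ ⊔ K₂)ᗮ
  have hrM : M.map (r.toLinearEquiv : E →ₗ[ℝ] E) = M := by
    rw [map_orthogonal_equiv, Submodule.map_sup, hr₁, hr₂]
  set F := LinearMap.eqLocus ((r.toLinearEquiv : E →ₗ[ℝ] E) ∘ₗ r.toLinearEquiv) LinearMap.id
  have le_F : ∀ K : Submodule ℝ E, finrank ℝ K = 1 →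
      K.map (r.toLinearEquiv : E →ₗ[ℝ] E) = K → K ≤ F := fun K hK hrK x hx =>
    r.apply_apply_eq_of_mem_of_finrank_eq_one hK hx (hrK ▸ mem_map_of_mem hx)
  have top_le_F : ⊤ ≤ F := by
    rw [← sup_orthogonal_of_hasOrthogonalProjection (K := K₁ ⊔ K₂)]
    exact sup_le (sup_le (le_F K₁ h₁ hr₁) (le_F K₂ h₂ hr₂))
      (le_F M (finrank_orthogonal_sup_eq_one hE h₁ h₂ hne) hrM)
  ext x
  simpa [pow_two] using LinearMap.mem_eqLocus.mp (top_le_F (mem_top (x := x)))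

end FinrankThree

theorem stmt14_general (L : Submodule ℝ E3) (hL : Module.finrank ℝ L = 1)
    (k : ℕ) (hk : 3 ≤ k) (r : E3 ≃ₗᵢ[ℝ] E3)
    (hraxis : ∀ x ∈ L, r x = x) (hrord : orderOf r = k)
    (H : AffineSubspace ℝ E3) (hH : Module.finrank ℝ H.direction = 2)
    (hinv : r '' (H : Set E3) = H) :
    H.direction = Lᗮ := by
  set f : E3 →ₗ[ℝ] E3 := (r.toLinearEquiv : E3 →ₗ[ℝ] E3)
  have hrL : L.map f = L := by
    ext x
    refine ⟨?_, fun hx => ⟨x, hx, hraxis x hx⟩⟩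
    rintro ⟨y, hy, rfl⟩
    exact (hraxis y hy).symm ▸ hy
  have hrD : H.directionᗮ.map f = H.directionᗮ := by
    rw [map_orthogonal_equiv, AffineSubspace.direction_map_eq_of_image_eq f hinv]
  have hD : finrank ℝ H.directionᗮ = 1 := by
    have := finrank_add_finrank_orthogonal H.direction
    rw [hH, finrank_euclideanSpace_fin] at this
    omega
  have hLD : L = H.directionᗮ := by
    by_contra hne
    have hr2 := r.sq_eq_one_of_map_eq_of_finrank_eq_one finrank_euclideanSpace_fin hL hD hne hrL hrD
    have := orderOf_le_of_pow_eq_one two_pos hr2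
    omega
  rw [hLD, orthogonal_orthogonal]

/-- If a rotation `r` of order `k ≥ 3` about a line `L` through the origin maps an affine
plane `H ⊆ ℝ³` to itself, then `H` is perpendicular to `L`. -/
theorem stmt14 (L : Submodule ℝ E3) (hL : Module.finrank ℝ L = 1)
    (k : ℕ) (hk : 3 ≤ k) (r : E3 ≃ₗᵢ[ℝ] E3)
    (hrdet : detLIE r = 1) (hraxis : ∀ x ∈ L, r x = x) (hrord : orderOf r = k)
    (H : AffineSubspace ℝ E3) (hH : Module.finrank ℝ H.direction = 2)
    (hinv : r '' (H : Set E3) = H) :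
    H.direction = Lᗮ :=
  stmt14_general L hL k hk r hraxis hrord H hH hinv
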